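/- (Proposition 2(i).) Let Λ be a jointly continuous cross-impact model which is split-invariant, rotation-invariant, weakly cross-stable, and such that for every triple (Σ,Ω,R) and every linear subspace V of ℝⁿ one has ε² Λ(Σ^q_ε, Ω^q_ε, R^q_ε) → 0 as ε → 0⁺. Then Λ is semi-strongly fragmentation invariant: for every triple (Σ,Ω,R) and every nonzero linear subspace V with V ⊆ ker Σ and V ⊆ ker(Rᵀ), one has Π_V Λ(Σ,Ω,R) = 0 and Λ(Σ,Ω,R) Π_V = 0. (The condition V ⊆ ker(Rᵀ) reflects the paper's standing assumption ker Σ ⊆ ker Rᵀ.) -/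

import Mathlib

/-!
Split and rotation invariance combine, through the spectral theorem, into invariance under
conjugation by any symmetric positive definite `M`:
`Λ(M⁻¹ΣM⁻¹, MΩM, M⁻¹RM) = M⁻¹ Λ(Σ,Ω,R) M⁻¹`. For `M = Π̄_V + εΠ_V`, which fixes `Σ` and `R` when
`V ⊆ ker Σ ∩ ker Rᵀ`, the regularized model is therefore `N Λ(Σ,Ω,R) N` with
`N = Π̄_V + ε⁻¹Π_V`. Its `Π_V`–`Π_V` corner is `ε⁻² Π_V Λ Π_V`, so the regularity condition kills
`Π_V Λ Π_V`; its off-diagonal corners are `ε⁻¹ Π̄_V Λ Π_V` and `ε⁻¹ Π_V Λ Π̄_V`, so weak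
cross-stability kills them too.
-/

open Matrix
open scoped Classical

/-- `sqrtm A` is the unique symmetric positive semidefinite square root of a
symmetric positive semidefinite real matrix `A` (junk value `0` otherwise). -/
noncomputable def sqrtm {n : ℕ} (A : Matrix (Fin n) (Fin n) ℝ) : Matrix (Fin n) (Fin n) ℝ :=
  if h : A.PosSemidef then
    (h.1.eigenvectorUnitary : Matrix (Fin n) (Fin n) ℝ) * diagonal (fun i => Real.sqrt (h.1.eigenvalues i)) *
      (star h.1.eigenvectorUnitary : Matrix (Fin n) (Fin n) ℝ) else 0

/-- The Kyle cross-impact matrix `Λ_kyle(Σ,Ω) = (√Ω)⁻¹ √(√Ω Σ √Ω) (√Ω)⁻¹`. -/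
noncomputable def kyle {n : ℕ} (S W : Matrix (Fin n) (Fin n) ℝ) : Matrix (Fin n) (Fin n) ℝ :=
  (sqrtm W)⁻¹ * sqrtm (sqrtm W * S * sqrtm W) * (sqrtm W)⁻¹

/-- The matrix of the orthogonal projection of `ℝⁿ` (with the standard inner product)
onto the linear subspace `V`. -/
noncomputable def projMat {n : ℕ} (V : Submodule ℝ (EuclideanSpace ℝ (Fin n))) :
    Matrix (Fin n) (Fin n) ℝ :=
  LinearMap.toMatrix' ((EuclideanSpace.equiv (Fin n) ℝ).toLinearMap ∘ₗ V.subtype ∘ₗ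
    (V.orthogonalProjectionOnto).toLinearMap ∘ₗ ((EuclideanSpace.equiv (Fin n) ℝ).symm.toLinearMap))

/-- The regularizing matrix `Π̄_V + ε Π_V`. -/
noncomputable def reg {n : ℕ} (V : Submodule ℝ (EuclideanSpace ℝ (Fin n))) (ε : ℝ) :
    Matrix (Fin n) (Fin n) ℝ :=
  (1 - projMat V) + ε • projMat V

attribute [local instance] Matrix.normedAddCommGroup
attribute [local instance] Matrix.normedSpace

open Filter Topology

lemma mul_eq_zero_and_mul_eq_zero_of_corners {R : Type*} [Ring R] {p a : R} (h₁ : p * a * p = 0)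
    (h₂ : (1 - p) * a * p = 0) (h₃ : p * a * (1 - p) = 0) : p * a = 0 ∧ a * p = 0 := by
  constructor
  · calc p * a = p * a * p + p * a * (1 - p) := by noncomm_ring
      _ = 0 := by rw [h₁, h₃, add_zero]
  · calc a * p = p * a * p + (1 - p) * a * p := by noncomm_ring
      _ = 0 := by rw [h₁, h₂, add_zero]

lemma eq_zero_of_eventually_norm_inv_smul_le {E : Type*} [NormedAddCommGroup E] [NormedSpace ℝ E]
    {x : E} {C : ℝ} (h : ∀ᶠ ε in 𝓝[>] (0 : ℝ), ‖ε⁻¹ • x‖ ≤ C) : x = 0 := by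
  have hlim : Tendsto (fun ε : ℝ => C * ε) (𝓝[>] 0) (𝓝 0) :=
    ((continuous_const_mul C).tendsto' 0 0 (mul_zero C)).mono_left nhdsWithin_le_nhds
  refine norm_le_zero_iff.mp (ge_of_tendsto hlim ?_)
  filter_upwards [h, self_mem_nhdsWithin] with ε hle (hε : 0 < ε)
  rw [norm_smul, Real.norm_of_nonneg (inv_nonneg.mpr hε.le), inv_mul_le_iff₀ hε] at hle
  linarith

section Projection

variable {n : ℕ} (V : Submodule ℝ (EuclideanSpace ℝ (Fin n)))

lemma toEuclideanCLM_projMat : toEuclideanCLM (𝕜 := ℝ) (projMat V) = V.starProjection := by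
  ext x i
  simp [projMat]

lemma isStarProjection_projMat : IsStarProjection (projMat V) where
  isIdempotentElem := EquivLike.injective (toEuclideanCLM (𝕜 := ℝ) (n := Fin n)) <| by
    rw [map_mul, toEuclideanCLM_projMat]; exact V.isIdempotentElem_starProjection
  isSelfAdjoint := EquivLike.injective (toEuclideanCLM (𝕜 := ℝ) (n := Fin n)) <| by
    rw [map_star, toEuclideanCLM_projMat]; exact isSelfAdjoint_starProjection V

lemma projMat_mulVec (x : EuclideanSpace ℝ (Fin n)) :
    projMat V *ᵥ x.ofLp = (V.starProjection x).ofLp := by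
  rw [← toEuclideanCLM_projMat, ofLp_toEuclideanCLM]

lemma transpose_projMat : (projMat V)ᵀ = projMat V := by
  rw [← conjTranspose_eq_transpose_of_trivial]
  exact (isStarProjection_projMat V).isSelfAdjoint

variable {V}

lemma mul_projMat_eq_zero {A : Matrix (Fin n) (Fin n) ℝ}
    (h : ∀ v ∈ V, A *ᵥ EuclideanSpace.equiv (Fin n) ℝ v = 0) : A * projMat V = 0 := by
  refine ext_of_mulVec_single fun i => ?_
  have hi : (Pi.single i 1 : Fin n → ℝ) = (EuclideanSpace.single i (1 : ℝ)).ofLp := by simp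
  rw [zero_mulVec, ← mulVec_mulVec, hi, projMat_mulVec]
  exact h _ (V.starProjection_apply_mem _)

lemma projMat_mul_eq_zero {A : Matrix (Fin n) (Fin n) ℝ}
    (h : ∀ v ∈ V, Aᵀ *ᵥ EuclideanSpace.equiv (Fin n) ℝ v = 0) : projMat V * A = 0 := by
  simpa [transpose_projMat] using congrArg transpose (mul_projMat_eq_zero h)

end Projection

section Regularization

variable {n : ℕ} (V : Submodule ℝ (EuclideanSpace ℝ (Fin n)))

lemma reg_mul_reg (a b : ℝ) : reg V a * reg V b = reg V (a * b) := by
  have hP := (isStarProjection_projMat V).isIdempotentElem.eq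
  simp only [reg, add_mul, mul_add, sub_mul, mul_sub, smul_mul_assoc, mul_smul_comm, hP, one_mul,
    mul_one]
  module

lemma reg_one : reg V 1 = 1 := by
  simp [reg]

lemma inv_reg {a : ℝ} (ha : a ≠ 0) : (reg V a)⁻¹ = reg V a⁻¹ :=
  inv_eq_right_inv (by rw [reg_mul_reg, mul_inv_cancel₀ ha, reg_one])

lemma transpose_reg (a : ℝ) : (reg V a)ᵀ = reg V a := by
  simp [reg, transpose_projMat]

lemma posDef_reg {a : ℝ} (ha : 0 < a) : (reg V a).PosDef := by
  have hunit : IsUnit (reg V √a) :=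
    .of_mul_eq_one _ (by rw [reg_mul_reg, mul_inv_cancel₀ (by positivity), reg_one])
  have := (IsUnit.posDef_star_left_conjugate_iff hunit).mpr PosDef.one
  rwa [star_eq_conjTranspose, conjTranspose_eq_transpose_of_trivial, transpose_reg, mul_one,
    reg_mul_reg, Real.mul_self_sqrt ha.le] at this

lemma projMat_mul_reg (a : ℝ) : projMat V * reg V a = a • projMat V := by
  have hP := (isStarProjection_projMat V).isIdempotentElem.eq
  simp only [reg, mul_add, mul_sub, mul_smul_comm, hP, mul_one]
  module

lemma reg_mul_projMat (a : ℝ) : reg V a * projMat V = a • projMat V := by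
  have hP := (isStarProjection_projMat V).isIdempotentElem.eq
  simp only [reg, add_mul, sub_mul, smul_mul_assoc, hP, one_mul]
  module

variable {V}

lemma reg_mul_of_projMat_mul_eq_zero {X : Matrix (Fin n) (Fin n) ℝ} (h : projMat V * X = 0)
    (a : ℝ) : reg V a * X = X := by
  simp [reg, add_mul, sub_mul, h]

lemma mul_reg_of_mul_projMat_eq_zero {X : Matrix (Fin n) (Fin n) ℝ} (h : X * projMat V = 0)
    (a : ℝ) : X * reg V a = X := by
  simp [reg, mul_add, mul_sub, h]

variable (V)

lemma tendsto_smul_reg_inv :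
    Tendsto (fun ε : ℝ => ε • reg V ε⁻¹) (𝓝[≠] 0) (𝓝 (projMat V)) := by
  have hlim : Tendsto (fun ε : ℝ => ε • (1 - projMat V) + projMat V) (𝓝 0) (𝓝 (projMat V)) :=
    ((continuous_id.smul continuous_const).add continuous_const).tendsto' 0 _ (by simp)
  refine (hlim.mono_left nhdsWithin_le_nhds).congr' ?_
  filter_upwards [self_mem_nhdsWithin] with ε hε
  rw [reg, smul_add, smul_smul, mul_inv_cancel₀ hε, one_smul]

lemma tendsto_sq_smul_reg_inv_conj (A : Matrix (Fin n) (Fin n) ℝ) :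
    Tendsto (fun ε : ℝ => ε ^ 2 • (reg V ε⁻¹ * A * reg V ε⁻¹)) (𝓝[≠] 0)
      (𝓝 (projMat V * A * projMat V)) := by
  refine (((tendsto_smul_reg_inv V).mul tendsto_const_nhds).mul (tendsto_smul_reg_inv V)).congr
    fun ε => ?_
  simp only [smul_mul_assoc, mul_smul_comm, smul_smul, sq]

end Regularization

section Invariance

variable {ι : Type*} [Fintype ι] [DecidableEq ι]

def IsSplitInvariant (Λ : Matrix ι ι ℝ → Matrix ι ι ℝ → Matrix ι ι ℝ → Matrix ι ι ℝ) : Prop :=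
  ∀ S W R : Matrix ι ι ℝ, S.PosSemidef → W.PosDef → ∀ d : ι → ℝ, (∀ i, 0 < d i) →
    Λ ((diagonal d)⁻¹ * S * (diagonal d)⁻¹) (diagonal d * W * diagonal d)
      ((diagonal d)⁻¹ * R * diagonal d) = (diagonal d)⁻¹ * Λ S W R * (diagonal d)⁻¹

def IsRotationInvariant (Λ : Matrix ι ι ℝ → Matrix ι ι ℝ → Matrix ι ι ℝ → Matrix ι ι ℝ) : Prop :=
  ∀ S W R : Matrix ι ι ℝ, S.PosSemidef → W.PosDef → ∀ O : Matrix ι ι ℝ, O * Oᵀ = 1 →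
    Λ (O * S * Oᵀ) (O * W * Oᵀ) (O * R * Oᵀ) = O * Λ S W R * Oᵀ

lemma Matrix.PosDef.exists_orthogonal_diagonal {M : Matrix ι ι ℝ} (hM : M.PosDef) :
    ∃ (U : Matrix ι ι ℝ) (d : ι → ℝ), U * Uᵀ = 1 ∧ (∀ i, 0 < d i) ∧ M = U * diagonal d * Uᵀ := by
  refine ⟨hM.1.eigenvectorUnitary, hM.1.eigenvalues, ?_, hM.eigenvalues_pos, ?_⟩
  · simpa [star_eq_conjTranspose, conjTranspose_eq_transpose_of_trivial] using
      mem_unitaryGroup_iff.mp hM.1.eigenvectorUnitary.2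
  · simpa [Unitary.conjStarAlgAut_apply, star_eq_conjTranspose,
      conjTranspose_eq_transpose_of_trivial] using hM.1.spectral_theorem

variable {Λ : Matrix ι ι ℝ → Matrix ι ι ℝ → Matrix ι ι ℝ → Matrix ι ι ℝ}
  {S W R : Matrix ι ι ℝ}

lemma map_orthogonal_diagonal_conj (hsplit : IsSplitInvariant Λ) (hrot : IsRotationInvariant Λ)
    (hS : S.PosSemidef) (hW : W.PosDef) {U : Matrix ι ι ℝ} (hU : U * Uᵀ = 1) {d : ι → ℝ}
    (hd : ∀ i, 0 < d i) :
    let M := U * diagonal d * Uᵀ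
    let M' := U * (diagonal d)⁻¹ * Uᵀ
    Λ (M' * S * M') (M * W * M) (M' * R * M) = M' * Λ S W R * M' := by
  intro M M'
  have hUunit : IsUnit U := .of_mul_eq_one _ hU
  have hDunit : IsUnit (diagonal d) :=
    isUnit_diagonal.mpr (Pi.isUnit_iff.mpr fun i => (hd i).ne'.isUnit)
  have hS₁ : (Uᵀ * S * U).PosSemidef := by
    simpa [conjTranspose_eq_transpose_of_trivial] using hS.conjTranspose_mul_mul_same U
  have hW₁ : (Uᵀ * W * U).PosDef := by
    simpa [conjTranspose_eq_transpose_of_trivial] using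
      hW.conjTranspose_mul_mul_same (mulVec_injective_of_isUnit hUunit)
  have hS₂ : ((diagonal d)⁻¹ * (Uᵀ * S * U) * (diagonal d)⁻¹).PosSemidef := by
    simpa [transpose_nonsing_inv] using hS₁.conjTranspose_mul_mul_same (diagonal d)⁻¹
  have hW₂ : (diagonal d * (Uᵀ * W * U) * diagonal d).PosDef := by
    simpa using hW₁.conjTranspose_mul_mul_same (mulVec_injective_of_isUnit hDunit)
  have h₁ := hrot S W R hS hW Uᵀ (by rw [transpose_transpose]; exact mul_eq_one_comm.mp hU)
  have h₂ := hsplit _ _ (Uᵀ * R * U) hS₁ hW₁ d hd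
  have h₃ := hrot _ _ ((diagonal d)⁻¹ * (Uᵀ * R * U) * diagonal d) hS₂ hW₂ U hU
  rw [transpose_transpose] at h₁
  rw [h₁] at h₂
  rw [h₂] at h₃
  simpa only [M, M', Matrix.mul_assoc] using h₃

lemma map_posDef_conj (hsplit : IsSplitInvariant Λ) (hrot : IsRotationInvariant Λ)
    (hS : S.PosSemidef) (hW : W.PosDef) {M : Matrix ι ι ℝ} (hM : M.PosDef) :
    Λ (M⁻¹ * S * M⁻¹) (M * W * M) (M⁻¹ * R * M) = M⁻¹ * Λ S W R * M⁻¹ := by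
  obtain ⟨U, d, hU, hd, rfl⟩ := hM.exists_orthogonal_diagonal
  have hM_inv : (U * diagonal d * Uᵀ)⁻¹ = U * (diagonal d)⁻¹ * Uᵀ := by
    rw [Matrix.mul_inv_rev, Matrix.mul_inv_rev, inv_eq_left_inv hU, inv_eq_right_inv hU, Matrix.mul_assoc]
  rw [hM_inv]
  exact map_orthogonal_diagonal_conj hsplit hrot hS hW hU hd

end Invariance

section Corners

variable {n : ℕ} (V : Submodule ℝ (EuclideanSpace ℝ (Fin n))) (A : Matrix (Fin n) (Fin n) ℝ) (a : ℝ)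

lemma one_sub_projMat_mul_reg_conj_mul_projMat :
    (1 - projMat V) * (reg V a * A * reg V a) * projMat V = a • ((1 - projMat V) * A * projMat V) := by
  calc (1 - projMat V) * (reg V a * A * reg V a) * projMat V
      = ((1 - projMat V) * reg V a) * A * (reg V a * projMat V) := by simp only [Matrix.mul_assoc]
    _ = (1 - projMat V) * A * (a • projMat V) := by
      rw [mul_reg_of_mul_projMat_eq_zero (isStarProjection_projMat V).one_sub_mul_self,
        reg_mul_projMat]
    _ = a • ((1 - projMat V) * A * projMat V) := mul_smul_comm _ _ _

lemma projMat_mul_reg_conj_mul_one_sub_projMat :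
    projMat V * (reg V a * A * reg V a) * (1 - projMat V) = a • (projMat V * A * (1 - projMat V)) := by
  calc projMat V * (reg V a * A * reg V a) * (1 - projMat V)
      = (projMat V * reg V a) * A * (reg V a * (1 - projMat V)) := by simp only [Matrix.mul_assoc]
    _ = (a • projMat V) * A * (1 - projMat V) := by
      rw [reg_mul_of_projMat_mul_eq_zero (isStarProjection_projMat V).mul_one_sub_self,
        projMat_mul_reg]
    _ = a • (projMat V * A * (1 - projMat V)) := by rw [smul_mul_assoc, smul_mul_assoc]

end Corners

lemma map_regularized_eq {n : ℕ}
    {Λ : Matrix (Fin n) (Fin n) ℝ → Matrix (Fin n) (Fin n) ℝ → Matrix (Fin n) (Fin n) ℝ →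
      Matrix (Fin n) (Fin n) ℝ}
    (hsplit : IsSplitInvariant Λ) (hrot : IsRotationInvariant Λ) {S W R : Matrix (Fin n) (Fin n) ℝ}
    (hS : S.PosSemidef) (hW : W.PosDef) {V : Submodule ℝ (EuclideanSpace ℝ (Fin n))}
    (hSP : S * projMat V = 0) (hPR : projMat V * R = 0) {ε : ℝ} (hε : 0 < ε) :
    Λ S (reg V ε * W * reg V ε) (R * reg V ε) = reg V ε⁻¹ * Λ S W R * reg V ε⁻¹ := by
  have hPS : projMat V * S = 0 := by
    have hSt : Sᵀ = S := by rw [← conjTranspose_eq_transpose_of_trivial]; exact hS.1.eq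
    simpa [transpose_projMat, hSt] using congrArg transpose hSP
  have h := map_posDef_conj (R := R) hsplit hrot hS hW (posDef_reg V hε)
  rwa [inv_reg V hε.ne', reg_mul_of_projMat_mul_eq_zero hPS, mul_reg_of_mul_projMat_eq_zero hSP,
    reg_mul_of_projMat_mul_eq_zero hPR] at h

theorem weakCrossStability_implies_semiStrongFragmentation_general {n : ℕ}
    (Λ : Matrix (Fin n) (Fin n) ℝ → Matrix (Fin n) (Fin n) ℝ → Matrix (Fin n) (Fin n) ℝ → Matrix (Fin n) (Fin n) ℝ)
    (hsplit : ∀ S W R : Matrix (Fin n) (Fin n) ℝ, S.PosSemidef → W.PosDef → ∀ d : Fin n → ℝ, (∀ i, 0 < d i) →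
      Λ ((diagonal d)⁻¹ * S * (diagonal d)⁻¹) (diagonal d * W * diagonal d)
        ((diagonal d)⁻¹ * R * diagonal d)
        = (diagonal d)⁻¹ * Λ S W R * (diagonal d)⁻¹)
    (hrot : ∀ S W R : Matrix (Fin n) (Fin n) ℝ, S.PosSemidef → W.PosDef → ∀ O : Matrix (Fin n) (Fin n) ℝ, O * Oᵀ = 1 →
      Λ (O * S * Oᵀ) (O * W * Oᵀ) (O * R * Oᵀ) = O * Λ S W R * Oᵀ)
    (hwcs : ∀ S W R : Matrix (Fin n) (Fin n) ℝ, S.PosSemidef → W.PosDef →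
      ∀ V : Submodule ℝ (EuclideanSpace ℝ (Fin n)), ∃ C : ℝ,
        ∀ᶠ ε in nhdsWithin (0 : ℝ) (Set.Ioi 0),
          ‖(1 - projMat V) * Λ S (reg V ε * W * reg V ε) (R * reg V ε) * projMat V‖ ≤ C ∧
          ‖projMat V * Λ S (reg V ε * W * reg V ε) (R * reg V ε) * (1 - projMat V)‖ ≤ C)
    (hreg : ∀ S W R : Matrix (Fin n) (Fin n) ℝ, S.PosSemidef → W.PosDef →
      ∀ V : Submodule ℝ (EuclideanSpace ℝ (Fin n)),
        Filter.Tendsto (fun ε : ℝ => (ε ^ 2) • Λ S (reg V ε * W * reg V ε) (R * reg V ε))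
          (nhdsWithin 0 (Set.Ioi 0)) (nhds 0)) :
    ∀ S W R : Matrix (Fin n) (Fin n) ℝ, S.PosSemidef → W.PosDef →
      ∀ V : Submodule ℝ (EuclideanSpace ℝ (Fin n)), V ≠ ⊥ →
      (∀ v ∈ V, S.mulVec (EuclideanSpace.equiv (Fin n) ℝ v) = 0) →
      (∀ v ∈ V, Rᵀ.mulVec (EuclideanSpace.equiv (Fin n) ℝ v) = 0) →
      projMat V * Λ S W R = 0 ∧ Λ S W R * projMat V = 0 := by
  intro S W R hS hW V _ hSV hRV
  set P := projMat V
  set A := Λ S W R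
  have hΛ : ∀ ε : ℝ, 0 < ε →
      Λ S (reg V ε * W * reg V ε) (R * reg V ε) = reg V ε⁻¹ * A * reg V ε⁻¹ := fun ε hε =>
    map_regularized_eq hsplit hrot hS hW (mul_projMat_eq_zero hSV) (projMat_mul_eq_zero hRV) hε
  have hPAP : P * A * P = 0 := by
    refine tendsto_nhds_unique ((tendsto_sq_smul_reg_inv_conj V A).mono_left (nhdsGT_le_nhdsNE 0))
      ((hreg S W R hS hW V).congr' ?_)
    filter_upwards [self_mem_nhdsWithin] with ε hε
    rw [hΛ ε hε]
  obtain ⟨C, hC⟩ := hwcs S W R hS hW V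
  refine mul_eq_zero_and_mul_eq_zero_of_corners hPAP ?_ ?_ <;>
    refine eq_zero_of_eventually_norm_inv_smul_le (C := C) ?_ <;>
    filter_upwards [hC, self_mem_nhdsWithin] with ε hCε hε
  · rw [← one_sub_projMat_mul_reg_conj_mul_projMat, ← hΛ ε hε]
    exact hCε.1
  · rw [← projMat_mul_reg_conj_mul_one_sub_projMat, ← hΛ ε hε]
    exact hCε.2

/-- Proposition 2(i): a jointly continuous, split- and rotation-invariant,
weakly cross-stable cross-impact model satisfying the regularity condition is
semi-strongly fragmentation invariant. -/
theorem weakCrossStability_implies_semiStrongFragmentation {n : ℕ}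
    (Λ : Matrix (Fin n) (Fin n) ℝ → Matrix (Fin n) (Fin n) ℝ → Matrix (Fin n) (Fin n) ℝ → Matrix (Fin n) (Fin n) ℝ)
    (hcont : ContinuousOn
      (fun p : Matrix (Fin n) (Fin n) ℝ × Matrix (Fin n) (Fin n) ℝ × Matrix (Fin n) (Fin n) ℝ => Λ p.1 p.2.1 p.2.2)
      {p : Matrix (Fin n) (Fin n) ℝ × Matrix (Fin n) (Fin n) ℝ × Matrix (Fin n) (Fin n) ℝ | p.1.PosSemidef ∧ p.2.1.PosDef})
    (hsplit : ∀ S W R : Matrix (Fin n) (Fin n) ℝ, S.PosSemidef → W.PosDef → ∀ d : Fin n → ℝ, (∀ i, 0 < d i) →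
      Λ ((diagonal d)⁻¹ * S * (diagonal d)⁻¹) (diagonal d * W * diagonal d)
        ((diagonal d)⁻¹ * R * diagonal d)
        = (diagonal d)⁻¹ * Λ S W R * (diagonal d)⁻¹)
    (hrot : ∀ S W R : Matrix (Fin n) (Fin n) ℝ, S.PosSemidef → W.PosDef → ∀ O : Matrix (Fin n) (Fin n) ℝ, O * Oᵀ = 1 →
      Λ (O * S * Oᵀ) (O * W * Oᵀ) (O * R * Oᵀ) = O * Λ S W R * Oᵀ)
    (hwcs : ∀ S W R : Matrix (Fin n) (Fin n) ℝ, S.PosSemidef → W.PosDef →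
      ∀ V : Submodule ℝ (EuclideanSpace ℝ (Fin n)), ∃ C : ℝ,
        ∀ᶠ ε in nhdsWithin (0 : ℝ) (Set.Ioi 0),
          ‖(1 - projMat V) * Λ S (reg V ε * W * reg V ε) (R * reg V ε) * projMat V‖ ≤ C ∧
          ‖projMat V * Λ S (reg V ε * W * reg V ε) (R * reg V ε) * (1 - projMat V)‖ ≤ C)
    (hreg : ∀ S W R : Matrix (Fin n) (Fin n) ℝ, S.PosSemidef → W.PosDef →
      ∀ V : Submodule ℝ (EuclideanSpace ℝ (Fin n)),
        Filter.Tendsto (fun ε : ℝ => (ε ^ 2) • Λ S (reg V ε * W * reg V ε) (R * reg V ε))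
          (nhdsWithin 0 (Set.Ioi 0)) (nhds 0)) :
    ∀ S W R : Matrix (Fin n) (Fin n) ℝ, S.PosSemidef → W.PosDef →
      ∀ V : Submodule ℝ (EuclideanSpace ℝ (Fin n)), V ≠ ⊥ →
      (∀ v ∈ V, S.mulVec (EuclideanSpace.equiv (Fin n) ℝ v) = 0) →
      (∀ v ∈ V, Rᵀ.mulVec (EuclideanSpace.equiv (Fin n) ℝ v) = 0) →
      projMat V * Λ S W R = 0 ∧ Λ S W R * projMat V = 0 :=
  weakCrossStability_implies_semiStrongFragmentation_general Λ hsplit hrot hwcs hreg
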